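/- For all θ with 0 < θ < π/2, we have 1 < θ/sin θ < 1/cos θ + sqrt((1 - cos θ)/(1 + cos θ)). -/

import Mathlib

open Real

lemma Real.one_lt_div_sin {x : ℝ} (hx0 : 0 < x) (hxπ : x < π) : 1 < x / sin x :=
  (one_lt_div (sin_pos_of_pos_of_lt_pi hx0 hxπ)).2 (sin_lt hx0)

lemma Real.div_sin_lt_one_div_cos {x : ℝ} (hx0 : 0 < x) (hx : x < π / 2) :
    x / sin x < 1 / cos x := by
  have hsin : 0 < sin x := sin_pos_of_pos_of_lt_pi hx0 (hx.trans (by linarith [pi_pos]))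
  have hcos : 0 < cos x := cos_pos_of_mem_Ioo ⟨by linarith [pi_pos], hx⟩
  rw [div_lt_div_iff₀ hsin hcos, one_mul, ← lt_div_iff₀ hcos, ← tan_eq_sin_div_cos]
  exact lt_tan hx0 hx

theorem stmt_1 (θ : ℝ) (h1 : 0 < θ) (h2 : θ < π / 2) :
    1 < θ / sin θ ∧ θ / sin θ < 1 / cos θ + Real.sqrt ((1 - cos θ) / (1 + cos θ)) :=
  ⟨one_lt_div_sin h1 (h2.trans (by linarith [pi_pos])),
    lt_add_of_lt_of_nonneg (div_sin_lt_one_div_cos h1 h2) (sqrt_nonneg _)⟩
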